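/- arXiv:1602.02634 — 4 statements merged into one kernel-verified Lean document; each statement's English description precedes it below -/
import Mathlib

section
/- If F is an intersecting family of k-element subsets of [n] with 1 ≤ k ≤ n/2, then |F| ≤ C(n-1, k-1) (binomial coefficient n-1 choose k-1). -/
/-- **Erdős–Ko–Rado.** If `F` is an intersecting family of `k`-element
subsets of `[n]` with `1 ≤ k` and `k ≤ n/2` (i.e. `2*k ≤ n`), then
`|F| ≤ C(n-1, k-1)`. -/
theorem erdos_ko_rado (n k : ℕ) (hk : 1 ≤ k) (hkn : 2 * k ≤ n)
    (F : Finset (Finset ℕ))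
    (hsub : ∀ A ∈ F, A ⊆ Finset.Icc 1 n)
    (hcard : ∀ A ∈ F, A.card = k)
    (hint : ∀ A ∈ F, ∀ B ∈ F, (A ∩ B).Nonempty) :
    F.card ≤ (n - 1).choose (k - 1) := by
  have hn0 : 0 < n := by omega
  set g : ℕ → Fin n := fun x => ⟨(x - 1) % n, Nat.mod_lt _ hn0⟩ with hg
  have hginj : ∀ x ∈ Finset.Icc 1 n, ∀ y ∈ Finset.Icc 1 n, g x = g y → x = y := by
    intro x hx y hy h
    simp only [Finset.mem_Icc] at hx hy
    have hx' : x - 1 < n := by omega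
    have hy' : y - 1 < n := by omega
    have : (x - 1) % n = (y - 1) % n := congrArg Fin.val h
    rw [Nat.mod_eq_of_lt hx', Nat.mod_eq_of_lt hy'] at this
    omega
  set 𝒜 : Finset (Finset (Fin n)) := F.image (fun A => A.image g) with h𝒜
  have hcard𝒜 : 𝒜.card = F.card := by
    apply Finset.card_image_of_injOn
    intro A hA B hB hAB
    simp only at hAB
    ext x
    constructor
    · intro hx
      have : g x ∈ B.image g := by
        rw [← hAB]; exact Finset.mem_image_of_mem g hx
      obtain ⟨y, hy, hxy⟩ := Finset.mem_image.mp this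
      have := hginj y (hsub B hB hy) x (hsub A hA hx) hxy
      rwa [← this]
    · intro hx
      have : g x ∈ A.image g := by
        rw [hAB]; exact Finset.mem_image_of_mem g hx
      obtain ⟨y, hy, hxy⟩ := Finset.mem_image.mp this
      have := hginj y (hsub A hA hy) x (hsub B hB hx) hxy
      rwa [← this]
  have hsized : (𝒜 : Set (Finset (Fin n))).Sized k := by
    intro A hA
    simp only [h𝒜, Finset.coe_image, Set.mem_image, Finset.mem_coe] at hA
    obtain ⟨B, hB, rfl⟩ := hA
    rw [Finset.card_image_of_injOn fun x hx y hy => hginj x (hsub B hB hx) y (hsub B hB hy),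
      hcard B hB]
  have hintersecting : (𝒜 : Set (Finset (Fin n))).Intersecting := by
    intro A hA B hB hdis
    simp only [h𝒜, Finset.coe_image, Set.mem_image, Finset.mem_coe] at hA hB
    obtain ⟨A', hA', rfl⟩ := hA
    obtain ⟨B', hB', rfl⟩ := hB
    obtain ⟨x, hx⟩ := hint A' hA' B' hB'
    rw [Finset.mem_inter] at hx
    exact (Finset.disjoint_left.mp hdis (Finset.mem_image_of_mem g hx.1))
      (Finset.mem_image_of_mem g hx.2)
  have := Finset.erdos_ko_rado hintersecting hsized (by omega)
  omega
end

section
/- Let t ≥ 1 and let F be a t-intersecting family of subsets of [n]. If n + t is even then |F| ≤ Σ_{i=(n+t)/2}^{n} C(n, i); if n + t is odd then |F| ≤ Σ_{i=(n+t+1)/2}^{n} C(n, i) + C(n-1, (n+t-1)/2). -/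
/-!
Split `F` into its levels `F # j`. If `A ∈ F # j` and `S ⊆ A` with `#(A \ S) = t - 1`, then
`A` meets `[n] \ S` in only `t - 1` points, so the complements of the `(t - 1)`-fold shadow of
`F # j` are `(n + t - 1 - j)`-sets outside `F`. By Katona's intersecting shadow theorem that
shadow is at least as large as `F # j`, hence
`#(F # j) + #(F # (n + t - 1 - j)) ≤ C(n, n + t - 1 - j)`. Summing over the pairs
`j < (n + t) / 2` gives the bound; for odd `n + t` the unpaired middle level `(n + t - 1) / 2` has
pairwise intersecting complements, and Erdős–Ko–Rado bounds it.

The shadow theorem is proved by shifting and induction on the ground set. In a shifted family the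
members containing the largest element `g` meet in at least `t + 1` points: on a large ground set
some point lies outside two such members, and replacing `g` by it in one of them would leave two
members meeting in `t - 1` points. So removing `g` from them leaves a `t`-intersecting family one
level lower. On a small ground set the iterated local LYM inequality already suffices.
-/

open Finset
open scoped FinsetFamily

namespace Finset

section SetFamily

variable {α : Type*} [DecidableEq α] {𝒜 : Finset (Finset α)} {G S : Finset α} {i j : α}
  {d k r : ℕ}

lemma card_insert_erase_of_notMem_of_mem (hi : i ∉ S) (hj : j ∈ S) :
    #(insert i (S.erase j)) = #S := by
  rw [card_insert_of_notMem fun h => hi (mem_of_mem_erase h), card_erase_add_one hj]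

lemma shadow_iterate_subset_powersetCard (h𝒜 : 𝒜 ⊆ G.powersetCard k) (d : ℕ) :
    ∂^[d] 𝒜 ⊆ G.powersetCard (k - d) := by
  intro S hS
  obtain ⟨A, hA, hSA, -⟩ := mem_shadow_iterate_iff_exists_sdiff.1 hS
  have hA' := mem_powersetCard.1 (h𝒜 hA)
  exact mem_powersetCard.2 ⟨hSA.trans hA'.1, hA'.2 ▸ Set.Sized.shadow_iterate
    (fun B hB => (mem_powersetCard.1 (h𝒜 hB)).2) hS⟩

lemma memberSubfamily_subset_powersetCard (h𝒜 : 𝒜 ⊆ G.powersetCard k) (a : α) :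
    𝒜.memberSubfamily a ⊆ (G.erase a).powersetCard (k - 1) := by
  intro A hA
  obtain ⟨haA𝒜, haA⟩ := mem_memberSubfamily.1 hA
  obtain ⟨hAG, hAk⟩ := mem_powersetCard.1 (h𝒜 haA𝒜)
  rw [card_insert_of_notMem haA] at hAk
  exact mem_powersetCard.2 ⟨subset_erase.2 ⟨(subset_insert a A).trans hAG, haA⟩, by omega⟩

lemma nonMemberSubfamily_subset_powersetCard (h𝒜 : 𝒜 ⊆ G.powersetCard k) (a : α) :
    𝒜.nonMemberSubfamily a ⊆ (G.erase a).powersetCard k := by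
  intro A hA
  obtain ⟨hA𝒜, haA⟩ := mem_nonMemberSubfamily.1 hA
  obtain ⟨hAG, hAk⟩ := mem_powersetCard.1 (h𝒜 hA𝒜)
  exact mem_powersetCard.2 ⟨subset_erase.2 ⟨hAG, haA⟩, hAk⟩

lemma card_shadow_iterate_memberSubfamily_add_le (𝒜 : Finset (Finset α)) (a : α) (d : ℕ) :
    #(∂^[d] (𝒜.memberSubfamily a)) + #(∂^[d] (𝒜.nonMemberSubfamily a)) ≤ #(∂^[d] 𝒜) := by
  have hnotMem : ∀ S ∈ ∂^[d] (𝒜.memberSubfamily a), a ∉ S := fun S hS haS => by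
    obtain ⟨A, hA, hSA, -⟩ := mem_shadow_iterate_iff_exists_sdiff.1 hS
    exact (mem_memberSubfamily.1 hA).2 (hSA haS)
  have hinsert : (∂^[d] (𝒜.memberSubfamily a)).image (insert a) ⊆ ∂^[d] 𝒜 := by
    simp only [image_subset_iff, mem_shadow_iterate_iff_exists_card, mem_memberSubfamily]
    rintro S ⟨u, hu, hSu, hSuA, haSu⟩
    refine ⟨u, hu, disjoint_insert_left.2 ⟨fun hau => haSu (mem_union_right _ hau), hSu⟩, ?_⟩
    rwa [insert_union]
  have hdisj : Disjoint ((∂^[d] (𝒜.memberSubfamily a)).image (insert a))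
      (∂^[d] (𝒜.nonMemberSubfamily a)) := by
    simp only [disjoint_left, mem_image]
    rintro _ ⟨S, -, rfl⟩ hS
    obtain ⟨A, hA, hSA, -⟩ := mem_shadow_iterate_iff_exists_sdiff.1 hS
    exact (mem_nonMemberSubfamily.1 hA).2 (hSA (mem_insert_self a S))
  have hinj : Set.InjOn (insert a) (∂^[d] (𝒜.memberSubfamily a) : Set (Finset α)) :=
    fun S hS T hT h => by rw [← erase_insert (hnotMem S hS), h, erase_insert (hnotMem T hT)]
  calc _ = #((∂^[d] (𝒜.memberSubfamily a)).image (insert a) ∪ ∂^[d] (𝒜.nonMemberSubfamily a)) := by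
        rw [card_union_of_disjoint hdisj, card_image_of_injOn hinj]
    _ ≤ #(∂^[d] 𝒜) :=
        card_le_card (union_subset hinsert (Monotone.iterate shadow_monotone d (filter_subset _ _)))

lemma card_mul_le_card_shadow_mul_of_subset_powersetCard (h𝒜 : 𝒜 ⊆ G.powersetCard r) :
    #𝒜 * r ≤ #(∂ 𝒜) * (#G - r + 1) := by
  refine card_mul_le_card_mul' (· ⊆ ·) (fun A hA => ?_) (fun S hS => ?_)
  · rw [← (mem_powersetCard.1 (h𝒜 hA)).2, ← card_image_of_injOn A.erase_injOn]
    refine card_le_card ?_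
    simp_rw [image_subset_iff, mem_bipartiteBelow]
    exact fun a ha => ⟨erase_mem_shadow hA ha, erase_subset _ _⟩
  · obtain ⟨A, hA, -, hSA⟩ := mem_shadow_iff_exists_mem_card_add_one.1 hS
    have hSG : S ⊆ G := (mem_powersetCard.1 (shadow_iterate_subset_powersetCard h𝒜 1 hS)).1
    have hAr := (mem_powersetCard.1 (h𝒜 hA)).2
    calc #(𝒜.bipartiteAbove (· ⊆ ·) S) ≤ #((G \ S).image (insert · S)) := by
          refine card_le_card fun B hB => ?_
          obtain ⟨hB𝒜, hSB⟩ := (mem_bipartiteAbove _).1 hB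
          obtain ⟨hBG, hBr⟩ := mem_powersetCard.1 (h𝒜 hB𝒜)
          obtain ⟨x, hxS, rfl⟩ := exists_eq_insert_iff.2 ⟨hSB, by omega⟩
          exact mem_image_of_mem _ (mem_sdiff.2 ⟨hBG (mem_insert_self x S), hxS⟩)
      _ ≤ #(G \ S) := card_image_le
      _ ≤ #G - r + 1 := by rw [card_sdiff_of_subset hSG]; omega

lemma card_mul_descFactorial_le_card_shadow_iterate_mul (h𝒜 : 𝒜 ⊆ G.powersetCard r) (d : ℕ) :
    #𝒜 * r.descFactorial d ≤ #(∂^[d] 𝒜) * (#G - r + d).descFactorial d := by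
  induction d with
  | zero => simp
  | succ d ih =>
    have hstep := card_mul_le_card_shadow_mul_of_subset_powersetCard
      (shadow_iterate_subset_powersetCard h𝒜 d)
    rw [← Function.iterate_succ_apply' shadow] at hstep
    calc #𝒜 * r.descFactorial (d + 1) = #𝒜 * r.descFactorial d * (r - d) := by
          rw [Nat.descFactorial_succ]; ring
      _ ≤ #(∂^[d] 𝒜) * (r - d) * (#G - r + d).descFactorial d := by
          rw [mul_right_comm _ (r - d)]; exact Nat.mul_le_mul_right _ ih
      _ ≤ #(∂^[d + 1] 𝒜) * (#G - (r - d) + 1) * (#G - r + d).descFactorial d :=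
          Nat.mul_le_mul_right _ hstep
      _ ≤ #(∂^[d + 1] 𝒜) * (#G - r + (d + 1)).descFactorial (d + 1) := by
          rw [← add_assoc, Nat.succ_descFactorial_succ, ← mul_assoc]
          gcongr
          omega

lemma card_le_card_shadow_iterate_of_card_add_le (h𝒜 : 𝒜 ⊆ G.powersetCard r) (hd : d ≤ r)
    (hG : #G + d ≤ 2 * r) : #𝒜 ≤ #(∂^[d] 𝒜) := by
  refine Nat.le_of_mul_le_mul_right ?_ (Nat.descFactorial_pos.2 hd)
  calc #𝒜 * r.descFactorial d ≤ #(∂^[d] 𝒜) * (#G - r + d).descFactorial d :=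
        card_mul_descFactorial_le_card_shadow_iterate_mul h𝒜 d
    _ ≤ #(∂^[d] 𝒜) * r.descFactorial d := by gcongr; omega

lemma card_image_sdiff (h𝒜 : ∀ A ∈ 𝒜, A ⊆ G) : #(𝒜.image (G \ ·)) = #𝒜 :=
  card_image_of_injOn fun A hA B hB h => by
    rw [← sdiff_sdiff_eq_self (h𝒜 A hA), ← sdiff_sdiff_eq_self (h𝒜 B hB)]
    exact congrArg _ h

lemma image_sdiff_subset_powersetCard (h𝒜 : 𝒜 ⊆ G.powersetCard k) :
    𝒜.image (G \ ·) ⊆ G.powersetCard (#G - k) := by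
  simp only [image_subset_iff, mem_powersetCard]
  intro A hA
  obtain ⟨hAG, hAk⟩ := mem_powersetCard.1 (h𝒜 hA)
  exact ⟨sdiff_subset, by rw [card_sdiff_of_subset hAG, hAk]⟩

theorem erdos_ko_rado_of_subset_powersetCard (h𝒜G : 𝒜 ⊆ G.powersetCard r)
    (h𝒜 : (𝒜 : Set (Finset α)).Intersecting) (hr : r ≤ #G / 2) :
    #𝒜 ≤ (#G - 1).choose (r - 1) := by
  let φ : Finset α → Finset (Fin #G) := fun A => (A.subtype (· ∈ G)).map G.equivFin.toEmbedding
  have hmem : ∀ A x (hx : x ∈ G), G.equivFin ⟨x, hx⟩ ∈ φ A ↔ x ∈ A := by simp [φ]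
  have hinj : Set.InjOn φ 𝒜 := by
    intro A hA B hB h
    ext x
    by_cases hx : x ∈ G
    · rw [← hmem A x hx, ← hmem B x hx, h]
    · exact iff_of_false (fun h => hx ((mem_powersetCard.1 (h𝒜G hA)).1 h))
        (fun h => hx ((mem_powersetCard.1 (h𝒜G hB)).1 h))
  calc #𝒜 = #(𝒜.image φ) := (card_image_of_injOn hinj).symm
    _ ≤ (#G - 1).choose (r - 1) := erdos_ko_rado ?_ ?_ hr
  · simp only [coe_image]
    rintro _ ⟨A, hA, rfl⟩ _ ⟨B, hB, rfl⟩
    obtain ⟨x, hxA, hxB⟩ := not_disjoint_iff.1 (h𝒜 hA hB)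
    have hx := (mem_powersetCard.1 (h𝒜G hA)).1 hxA
    exact not_disjoint_iff.2 ⟨_, (hmem A x hx).2 hxA, (hmem B x hx).2 hxB⟩
  · simp only [coe_image]
    rintro _ ⟨A, hA, rfl⟩
    obtain ⟨hAG, hAr⟩ := mem_powersetCard.1 (h𝒜G hA)
    simp [φ, card_subtype, filter_true_of_mem hAG, hAr]

end SetFamily

section TIntersecting

variable {α : Type*} [DecidableEq α] {𝒜 ℬ : Finset (Finset α)} {G A B C X : Finset α}
  {i j : α} {k t : ℕ}

def TIntersecting (𝒜 : Finset (Finset α)) (t : ℕ) : Prop :=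
  ∀ A ∈ 𝒜, ∀ B ∈ 𝒜, t ≤ #(A ∩ B)

lemma TIntersecting.mono (h𝒜 : 𝒜.TIntersecting t) (hℬ : ℬ ⊆ 𝒜) : ℬ.TIntersecting t :=
  fun A hA B hB => h𝒜 A (hℬ hA) B (hℬ hB)

lemma TIntersecting.le_card (h𝒜 : 𝒜.TIntersecting t) (hA : A ∈ 𝒜) : t ≤ #A :=
  inter_self A ▸ h𝒜 A hA A hA

lemma compress_singleton_of_notMem_of_mem (hi : i ∉ A) (hj : j ∈ A) :
    UV.compress {i} {j} A = insert i (A.erase j) := by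
  rw [UV.compress_of_disjoint_of_le (disjoint_singleton_left.2 hi) (singleton_subset_iff.2 hj),
    sup_eq_union]
  grind

lemma notMem_and_mem_of_compress_singleton_ne (hA : UV.compress {i} {j} A ≠ A) :
    i ∉ A ∧ j ∈ A := by
  rw [UV.compress, ite_ne_right_iff, disjoint_singleton_left, singleton_subset_iff] at hA
  exact hA.1

lemma mem_uvCompression_singleton (hX : X ∈ UV.compression {i} {j} 𝒜) :
    X ∈ 𝒜 ∧ UV.compress {i} {j} X ∈ 𝒜 ∨ ∃ A ∈ 𝒜, i ∉ A ∧ j ∈ A ∧ X = insert i (A.erase j) := by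
  refine (UV.mem_compression.1 hX).imp_right fun ⟨hX𝒜, A, hA, hAX⟩ => ⟨A, hA, ?_⟩
  obtain ⟨hiA, hjA⟩ := notMem_and_mem_of_compress_singleton_ne fun h => hX𝒜 (hAX ▸ h.symm ▸ hA)
  exact ⟨hiA, hjA, hAX ▸ compress_singleton_of_notMem_of_mem hiA hjA⟩

lemma le_card_inter_insert_erase (hiB : i ∉ B) (hjB : j ∈ B) (hCB : t ≤ #(C ∩ B))
    (hshift : j ∈ C → i ∉ C → t ≤ #(insert i (C.erase j) ∩ B)) :
    t ≤ #(C ∩ insert i (B.erase j)) := by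
  by_cases hjC : j ∈ C
  · by_cases hiC : i ∈ C
    · calc t ≤ #(C ∩ B) := hCB
        _ = #(insert i ((C ∩ B).erase j)) :=
          (card_insert_erase_of_notMem_of_mem (by simp [hiB]) (mem_inter.2 ⟨hjC, hjB⟩)).symm
        _ ≤ #(C ∩ insert i (B.erase j)) := card_le_card (by grind)
    · convert hshift hjC hiC using 2
      grind
  · exact hCB.trans (card_le_card (by grind))

lemma TIntersecting.uvCompression (h𝒜 : 𝒜.TIntersecting t) :
    (UV.compression {i} {j} 𝒜).TIntersecting t := by
  have hmoved : ∀ X ∈ UV.compression {i} {j} 𝒜, ∀ B ∈ 𝒜, i ∉ B → j ∈ B →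
      t ≤ #(X ∩ insert i (B.erase j)) := by
    intro X hX B hB hiB hjB
    obtain ⟨hX𝒜, hcX⟩ | ⟨A, hA, hiA, hjA, rfl⟩ := mem_uvCompression_singleton hX
    · refine le_card_inter_insert_erase hiB hjB (h𝒜 X hX𝒜 B hB) fun hjX hiX => ?_
      rw [← compress_singleton_of_notMem_of_mem hiX hjX]
      exact h𝒜 _ hcX B hB
    · calc t ≤ #(A ∩ B) := h𝒜 A hA B hB
        _ = #(insert i ((A ∩ B).erase j)) :=
          (card_insert_erase_of_notMem_of_mem (by simp [hiA]) (mem_inter.2 ⟨hjA, hjB⟩)).symm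
        _ = #(insert i (A.erase j) ∩ insert i (B.erase j)) := by congr 1; grind
  intro X hX Y hY
  obtain ⟨hY𝒜, -⟩ | ⟨B, hB, hiB, hjB, rfl⟩ := mem_uvCompression_singleton hY
  · obtain ⟨hX𝒜, -⟩ | ⟨A, hA, hiA, hjA, rfl⟩ := mem_uvCompression_singleton hX
    · exact h𝒜 X hX𝒜 Y hY𝒜
    · rw [inter_comm]; exact hmoved Y hY A hA hiA hjA
  · exact hmoved X hX B hB hiB hjB

lemma uvCompression_subset_powersetCard (hiG : i ∈ G) (h𝒜 : 𝒜 ⊆ G.powersetCard k) :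
    UV.compression {i} {j} 𝒜 ⊆ G.powersetCard k := by
  intro X hX
  obtain ⟨hX𝒜, -⟩ | ⟨A, hA, hiA, hjA, rfl⟩ := mem_uvCompression_singleton hX
  · exact h𝒜 hX𝒜
  · obtain ⟨hAG, hAk⟩ := mem_powersetCard.1 (h𝒜 hA)
    exact mem_powersetCard.2 ⟨insert_subset hiG ((erase_subset j A).trans hAG),
      (card_insert_erase_of_notMem_of_mem hiA hjA).trans hAk⟩

lemma shadow_iterate_uvCompression_subset (d : ℕ) :
    ∂^[d] (UV.compression {i} {j} 𝒜) ⊆ UV.compression {i} {j} (∂^[d] 𝒜) := by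
  induction d with
  | zero => rfl
  | succ d ih =>
    rw [Function.iterate_succ_apply', Function.iterate_succ_apply']
    refine (shadow_mono ih).trans (UV.shadow_compression_subset_compression_shadow _ _ ?_)
    simp [UV.isCompressed_self]

lemma card_shadow_iterate_uvCompression_le (d : ℕ) :
    #(∂^[d] (UV.compression {i} {j} 𝒜)) ≤ #(∂^[d] 𝒜) :=
  (card_le_card (shadow_iterate_uvCompression_subset d)).trans (UV.card_compression _ _ _).le

theorem TIntersecting.card_le_choose_of_card_add_eq (h𝒜 : 𝒜.TIntersecting t)
    (h𝒜G : 𝒜 ⊆ G.powersetCard k) (ht : 1 ≤ t) (hG : #G + t = 2 * k + 1) :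
    #𝒜 ≤ (#G - 1).choose k := by
  obtain rfl | ⟨A, hA⟩ := 𝒜.eq_empty_or_nonempty
  · simp
  have htk : t ≤ k := (mem_powersetCard.1 (h𝒜G hA)).2 ▸ h𝒜.le_card hA
  have hcompl : (𝒜.image (G \ ·) : Set (Finset α)).Intersecting := by
    simp only [coe_image]
    rintro _ ⟨A, hA, rfl⟩ _ ⟨B, hB, rfl⟩
    have hAk := (mem_powersetCard.1 (h𝒜G hA)).2
    have hBk := (mem_powersetCard.1 (h𝒜G hB)).2
    obtain ⟨x, hxG, hxAB⟩ := exists_mem_notMem_of_card_lt_card (s := A ∪ B) (t := G) (by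
      have := card_union_add_card_inter A B
      have := h𝒜 A hA B hB
      omega)
    exact not_disjoint_iff.2 ⟨x, mem_sdiff.2 ⟨hxG, fun h => hxAB (mem_union_left _ h)⟩,
      mem_sdiff.2 ⟨hxG, fun h => hxAB (mem_union_right _ h)⟩⟩
  calc #𝒜 = #(𝒜.image (G \ ·)) :=
        (card_image_sdiff fun B hB => (mem_powersetCard.1 (h𝒜G hB)).1).symm
    _ ≤ (#G - 1).choose (#G - k - 1) :=
        erdos_ko_rado_of_subset_powersetCard (image_sdiff_subset_powersetCard h𝒜G) hcompl
          (by omega)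
    _ = (#G - 1).choose k := by rw [← Nat.choose_symm (by omega)]; congr 1; omega

end TIntersecting

section Shifting

variable {α : Type*} [LinearOrder α] {𝒜 : Finset (Finset α)} {G : Finset α} {g : α} {k t : ℕ}

def IsShifted (𝒜 : Finset (Finset α)) (G : Finset α) : Prop :=
  ∀ i ∈ G, ∀ j ∈ G, i < j → UV.IsCompressed {i} {j} 𝒜

lemma TIntersecting.memberSubfamily_of_isShifted (h𝒜 : 𝒜.TIntersecting t)
    (h𝒜G : 𝒜 ⊆ G.powersetCard k) (hshift : 𝒜.IsShifted G) (hgG : g ∈ G) (hg : ∀ x ∈ G, x ≤ g)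
    (hG : 2 * k < #G + t) : (𝒜.memberSubfamily g).TIntersecting t := by
  intro A hA B hB
  obtain ⟨hgA𝒜, hgA⟩ := mem_memberSubfamily.1 hA
  obtain ⟨hgB𝒜, hgB⟩ := mem_memberSubfamily.1 hB
  by_contra! hAB
  have hAk := (mem_powersetCard.1 (h𝒜G hgA𝒜)).2
  have hBk := (mem_powersetCard.1 (h𝒜G hgB𝒜)).2
  rw [card_insert_of_notMem hgA] at hAk
  rw [card_insert_of_notMem hgB] at hBk
  have hgAB : t ≤ #(A ∩ B) + 1 := by
    rw [← card_insert_of_notMem fun h => hgA (mem_inter.1 h).1, insert_inter_distrib]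
    exact h𝒜 _ hgA𝒜 _ hgB𝒜
  obtain ⟨x, hxG, hx⟩ : ∃ x ∈ G, x ∉ insert g (A ∪ B) := by
    refine exists_mem_notMem_of_card_lt_card ((card_insert_le _ _).trans_lt ?_)
    have := card_union_add_card_inter A B
    omega
  have hxg : x < g := lt_of_le_of_ne (hg x hxG) fun h => hx (h ▸ mem_insert_self x _)
  have hxA𝒜 : insert x A ∈ 𝒜 := by
    have := UV.compress_mem_compression (u := {x}) (v := {g}) hgA𝒜
    rwa [(hshift x hxG g hgG hxg).eq, compress_singleton_of_notMem_of_mem (by grind)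
      (mem_insert_self g A), erase_insert hgA] at this
  have := h𝒜 _ hxA𝒜 _ hgB𝒜
  rw [show insert x A ∩ insert g B = A ∩ B by grind] at this
  omega

end Shifting

section Katona

variable {𝒜 : Finset (Finset ℕ)} {G : Finset ℕ} {i j k t : ℕ}

def weight (𝒜 : Finset (Finset ℕ)) : ℕ := ∑ A ∈ 𝒜, ∑ a ∈ A, a

lemma weight_uvCompression_lt (hij : i < j) (h𝒜 : UV.compression {i} {j} 𝒜 ≠ 𝒜) :
    weight (UV.compression {i} {j} 𝒜) < weight 𝒜 := by
  rw [UV.compression] at h𝒜 ⊢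
  have hmoved : {A ∈ 𝒜 | UV.compress {i} {j} A ∉ 𝒜}.Nonempty := by
    contrapose! h𝒜
    rw [filter_image, h𝒜, image_empty, union_empty, filter_eq_self]
    exact fun A hA => by_contra fun h => (eq_empty_iff_forall_notMem.1 h𝒜) A (mem_filter.2 ⟨hA, h⟩)
  rw [weight, weight, sum_union UV.compress_disjoint]
  conv_rhs => rw [← filter_union_filter_not_eq (UV.compress {i} {j} · ∈ 𝒜) 𝒜]
  rw [sum_union (disjoint_filter_filter_not _ _ _), add_lt_add_iff_left, filter_image,
    sum_image UV.compress_injOn]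
  refine sum_lt_sum_of_nonempty hmoved fun A hA => ?_
  obtain ⟨hA𝒜, hcA⟩ := mem_filter.1 hA
  obtain ⟨hiA, hjA⟩ := notMem_and_mem_of_compress_singleton_ne fun h => hcA (h ▸ hA𝒜)
  rw [compress_singleton_of_notMem_of_mem hiA hjA, sum_insert fun h => hiA (mem_of_mem_erase h),
    ← sum_erase_add _ _ hjA]
  omega

theorem TIntersecting.exists_isShifted {𝒜 : Finset (Finset ℕ)} {G : Finset ℕ} {k t : ℕ}
    (h𝒜 : 𝒜.TIntersecting t) (h𝒜G : 𝒜 ⊆ G.powersetCard k) :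
    ∃ ℬ ⊆ G.powersetCard k, ℬ.TIntersecting t ∧ ℬ.IsShifted G ∧ #ℬ = #𝒜 ∧
      ∀ d, #(∂^[d] ℬ) ≤ #(∂^[d] 𝒜) := by
  by_cases hshift : 𝒜.IsShifted G
  · exact ⟨𝒜, h𝒜G, h𝒜, hshift, rfl, fun _ => le_rfl⟩
  obtain ⟨i, hi, j, hj, hij, hne⟩ : ∃ i ∈ G, ∃ j ∈ G, i < j ∧ ¬UV.IsCompressed {i} {j} 𝒜 := by
    simpa [IsShifted] using hshift
  have := weight_uvCompression_lt hij hne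
  obtain ⟨ℬ, hℬG, hℬ, hℬshift, hcard, hshadow⟩ :=
    exists_isShifted (h𝒜.uvCompression (j := j)) (uvCompression_subset_powersetCard hi h𝒜G)
  exact ⟨ℬ, hℬG, hℬ, hℬshift, hcard.trans (UV.card_compression _ _ _),
    fun d => (hshadow d).trans (card_shadow_iterate_uvCompression_le d)⟩
termination_by weight 𝒜

theorem TIntersecting.card_le_card_shadow_iterate (h𝒜 : 𝒜.TIntersecting t)
    (h𝒜G : 𝒜 ⊆ G.powersetCard k) : #𝒜 ≤ #(∂^[t - 1] 𝒜) := by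
  induction G using Finset.strongInduction generalizing 𝒜 k with
  | H G ih =>
  obtain ⟨ℬ, hℬG, hℬ, hshift, hcard, hshadow⟩ := h𝒜.exists_isShifted h𝒜G
  refine hcard ▸ le_trans ?_ (hshadow (t - 1))
  obtain rfl | ⟨B, hB⟩ := ℬ.eq_empty_or_nonempty
  · simp
  have htk : t ≤ k := (mem_powersetCard.1 (hℬG hB)).2 ▸ hℬ.le_card hB
  by_cases hsmall : #G + (t - 1) ≤ 2 * k
  · exact card_le_card_shadow_iterate_of_card_add_le hℬG (by omega) hsmall
  have hGne : G.Nonempty := by rw [← card_pos]; omega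
  set g := G.max' hGne
  have hgG : g ∈ G := G.max'_mem hGne
  have hmember := hℬ.memberSubfamily_of_isShifted hℬG hshift hgG (fun x hx => G.le_max' x hx)
    (by omega)
  calc #ℬ = #(ℬ.memberSubfamily g) + #(ℬ.nonMemberSubfamily g) :=
        (card_memberSubfamily_add_card_nonMemberSubfamily g ℬ).symm
    _ ≤ #(∂^[t - 1] (ℬ.memberSubfamily g)) + #(∂^[t - 1] (ℬ.nonMemberSubfamily g)) :=
        add_le_add (ih _ (erase_ssubset hgG) hmember (memberSubfamily_subset_powersetCard hℬG g))
          (ih _ (erase_ssubset hgG) (hℬ.mono (filter_subset _ _))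
            (nonMemberSubfamily_subset_powersetCard hℬG g))
    _ ≤ #(∂^[t - 1] ℬ) := card_shadow_iterate_memberSubfamily_add_le ℬ g (t - 1)

end Katona

section Levels

variable {α : Type*} {𝒜 : Finset (Finset α)} {G : Finset α} {t : ℕ}

lemma slice_subset_powersetCard (h𝒜 : ∀ A ∈ 𝒜, A ⊆ G) (r : ℕ) : 𝒜 # r ⊆ G.powersetCard r :=
  fun A hA => mem_powersetCard.2 ⟨h𝒜 A (mem_slice.1 hA).1, (mem_slice.1 hA).2⟩

lemma card_eq_sum_range_card_slice {N : ℕ} (h𝒜 : ∀ A ∈ 𝒜, #A < N) :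
    #𝒜 = ∑ r ∈ range N, #(𝒜 # r) :=
  card_eq_sum_card_fiberwise fun A hA => mem_range.2 (h𝒜 A hA)

theorem TIntersecting.card_slice_add_card_slice_le {F : Finset (Finset ℕ)} {G : Finset ℕ}
    (hF : F.TIntersecting t) (hFG : ∀ A ∈ F, A ⊆ G) (ht : 1 ≤ t) (j : ℕ) :
    #(F # j) + #(F # (#G + t - 1 - j)) ≤ (#G).choose (#G + t - 1 - j) := by
  set m := #G + t - 1 - j
  obtain hj | ⟨A, hA⟩ := (F # j).eq_empty_or_nonempty
  · rw [hj, card_empty, zero_add, ← card_powersetCard]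
    exact card_le_card (slice_subset_powersetCard hFG m)
  obtain ⟨hAF, hAj⟩ := mem_slice.1 hA
  have htj : t ≤ j := hAj ▸ hF.le_card hAF
  have hjG : j ≤ #G := hAj ▸ card_le_card (hFG A hAF)
  set 𝒮 := ∂^[t - 1] (F # j)
  have h𝒮 : 𝒮 ⊆ G.powersetCard (j - (t - 1)) :=
    shadow_iterate_subset_powersetCard (slice_subset_powersetCard hFG j) _
  have hcompl : 𝒮.image (G \ ·) ⊆ G.powersetCard m := by
    convert image_sdiff_subset_powersetCard h𝒮 using 2
    omega
  have hdisj : Disjoint (𝒮.image (G \ ·)) (F # m) := by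
    simp only [disjoint_left, mem_image]
    rintro _ ⟨S, hS, rfl⟩ hSF
    obtain ⟨B, hB, hSB, hBS⟩ := mem_shadow_iterate_iff_exists_sdiff.1 hS
    have hBG := hFG B (slice_subset hB)
    have := hF B (slice_subset hB) _ (slice_subset hSF)
    rw [show B ∩ (G \ S) = B \ S by grind, hBS] at this
    omega
  calc #(F # j) + #(F # m) ≤ #𝒮 + #(F # m) := Nat.add_le_add_right
        ((hF.mono slice_subset).card_le_card_shadow_iterate (slice_subset_powersetCard hFG j)) _
    _ = #(𝒮.image (G \ ·) ∪ F # m) := by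
        rw [card_union_of_disjoint hdisj,
          card_image_sdiff fun S hS => (mem_powersetCard.1 (h𝒮 hS)).1]
    _ ≤ #(G.powersetCard m) := card_le_card (union_subset hcompl (slice_subset_powersetCard hFG m))
    _ = (#G).choose m := card_powersetCard _ _

end Levels

section Sums

variable {M : Type*} [AddCommMonoid M]

lemma sum_range_reflect_eq_sum_Ico (f : ℕ → M) {k N : ℕ} (hkN : k ≤ N) :
    ∑ j ∈ range k, f (N - 1 - j) = ∑ i ∈ Ico (N - k) N, f i := by
  rcases N with _ | N
  · simp [Nat.le_zero.1 hkN]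
  rw [range_eq_Ico, sum_Ico_reflect f 0 (by omega)]
  simp

lemma sum_range_eq_sum_range_add_reflect_add_sum_Ico (f : ℕ → M) {k N : ℕ} (hkN : 2 * k ≤ N) :
    ∑ i ∈ range N, f i = ∑ j ∈ range k, (f j + f (N - 1 - j)) + ∑ i ∈ Ico k (N - k), f i := by
  rw [sum_add_distrib, sum_range_reflect_eq_sum_Ico f (by omega), add_right_comm, add_assoc,
    sum_Ico_consecutive _ (by omega) (by omega), sum_range_add_sum_Ico _ (by omega)]

end Sums

end Finset

lemma Nat.sum_Ico_choose_eq_sum_Icc {n N : ℕ} (hn : n < N) (a : ℕ) :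
    ∑ i ∈ Ico a N, n.choose i = ∑ i ∈ Icc a n, n.choose i :=
  (sum_subset (fun i hi => by grind) fun i hi hin => Nat.choose_eq_zero_of_lt (by grind)).symm

/-- **Katona's t-intersecting theorem.** Let `t ≥ 1` and let `F` be a
`t`-intersecting family of subsets of `[n]`. If `n + t` is even then
`|F| ≤ Σ_{i=(n+t)/2}^{n} C(n,i)`; if `n + t` is odd then
`|F| ≤ Σ_{i=(n+t+1)/2}^{n} C(n,i) + C(n-1, (n+t-1)/2)`. -/
theorem katona_t_intersecting (n t : ℕ) (ht : 1 ≤ t) (F : Finset (Finset ℕ))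
    (hsub : ∀ A ∈ F, A ⊆ Finset.Icc 1 n)
    (hint : ∀ A ∈ F, ∀ B ∈ F, t ≤ (A ∩ B).card) :
    (Even (n + t) →
      F.card ≤ ∑ i ∈ Finset.Icc ((n + t) / 2) n, n.choose i) ∧
    (Odd (n + t) →
      F.card ≤ (∑ i ∈ Finset.Icc ((n + t + 1) / 2) n, n.choose i)
        + (n - 1).choose ((n + t - 1) / 2)) := by
  have hG : #(Icc 1 n) = n := by simp
  have hF : F.TIntersecting t := hint
  have hcard : #F = ∑ i ∈ range (n + t), #(F # i) := card_eq_sum_range_card_slice fun A hA =>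
    (card_le_card (hsub A hA)).trans_lt (by omega)
  have hpairs (k : ℕ) (hk : 2 * k ≤ n + t) :
      ∑ j ∈ range k, (#(F # j) + #(F # (n + t - 1 - j))) ≤ ∑ i ∈ Icc (n + t - k) n, n.choose i := by
    rw [← Nat.sum_Ico_choose_eq_sum_Icc (N := n + t) (by omega),
      ← sum_range_reflect_eq_sum_Ico _ (by omega)]
    exact sum_le_sum fun j _ => hG ▸ hF.card_slice_add_card_slice_le hsub ht j
  refine ⟨fun ⟨k, hk⟩ => ?_, fun ⟨k, hk⟩ => ?_⟩
  · rw [hcard, sum_range_eq_sum_range_add_reflect_add_sum_Ico _ (show 2 * k ≤ n + t by omega),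
      show n + t - k = k by omega, Ico_self, sum_empty, add_zero, show (n + t) / 2 = k by omega]
    simpa [show n + t - k = k by omega] using hpairs k (by omega)
  · have hmid : #(F # k) ≤ (n - 1).choose k := hG ▸
      (hF.mono slice_subset).card_le_choose_of_card_add_eq (slice_subset_powersetCard hsub k) ht
        (by omega)
    rw [hcard, sum_range_eq_sum_range_add_reflect_add_sum_Ico _ (show 2 * k ≤ n + t by omega),
      show n + t - k = k + 1 by omega, Nat.Ico_succ_singleton, sum_singleton,
      show (n + t + 1) / 2 = k + 1 by omega, show (n + t - 1) / 2 = k by omega]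
    exact add_le_add (by simpa [show n + t - k = k + 1 by omega] using hpairs k (by omega)) hmid
end

section
/- For all integers k and t with 1 ≤ t ≤ k there exists a threshold N(k, t) such that for every n > N(k, t), every t-intersecting family F of k-element subsets of [n] satisfies |F| ≤ C(n-t, k-t). -/
/-!
If the members of a `t`-intersecting family of `k`-sets all contain a common `t`-set `T`, the
family lies inside the star of `T`, which has exactly `C(n-t, k-t)` members. Otherwise fix a
member `A`: every member meets `A` in some `t`-set `T`, and since some member `W` avoids
containing `T`, every member through `T` also contains one of the at most `k` points of `W \ T`.
This bounds the family by `C(k,t) · k · C(n-t-1, k-t-1)`, which is at most `C(n-t, k-t)` as soon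
as `n - t ≥ C(k,t) · k · (k - t)`.
-/

open Finset

theorem Nat.mul_choose_le_choose_succ_succ {c m r : ℕ} (h : c * (r + 1) ≤ m + 1) :
    c * m.choose r ≤ (m + 1).choose (r + 1) := by
  refine Nat.le_of_mul_le_mul_right ?_ r.succ_pos
  calc c * m.choose r * (r + 1) = c * (r + 1) * m.choose r := by ring
    _ ≤ (m + 1) * m.choose r := Nat.mul_le_mul_right _ h
    _ = (m + 1).choose (r + 1) * (r + 1) := Nat.add_one_mul_choose_eq m r

namespace Finset

variable {α : Type*} [DecidableEq α] {U A T W : Finset α} {F : Finset (Finset α)} {k t : ℕ}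

theorem card_filter_superset_le (hF : F ⊆ U.powersetCard k) (hT : T ⊆ U) :
    #{B ∈ F | T ⊆ B} ≤ (#U - #T).choose (k - #T) := by
  calc #{B ∈ F | T ⊆ B} ≤ #((U \ T).powersetCard (k - #T)) := by
        refine card_le_card_of_injOn (· \ T) (fun B hB => ?_)
          ((superset_injOn_sdiff T).mono fun B hB => (mem_filter.1 hB).2)
        obtain ⟨hBF, hTB⟩ := mem_filter.1 hB
        obtain ⟨hBU, hBk⟩ := mem_powersetCard.1 (hF hBF)
        exact mem_powersetCard.2 ⟨sdiff_subset_sdiff hBU le_rfl, by rw [card_sdiff_of_subset hTB, hBk]⟩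
    _ = (#U - #T).choose (k - #T) := by rw [card_powersetCard, card_sdiff_of_subset hT]

theorem card_le_one_of_le_card_inter (hk : ∀ A ∈ F, #A = k)
    (hint : ∀ A ∈ F, ∀ B ∈ F, k ≤ #(A ∩ B)) : #F ≤ 1 := by
  refine card_le_one.2 fun A hA B hB => ?_
  have hAB : A ∩ B = A := eq_of_subset_of_card_le inter_subset_left (hk A hA ▸ hint A hA B hB)
  have hBA : A ∩ B = B := eq_of_subset_of_card_le inter_subset_right (hk B hB ▸ hint A hA B hB)
  rw [← hAB, hBA]

theorem card_le_sum_card_filter_superset (hA : ∀ B ∈ F, t ≤ #(A ∩ B)) :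
    #F ≤ ∑ T ∈ A.powersetCard t, #{B ∈ F | T ⊆ B} := by
  refine (card_le_card fun B hB => ?_).trans card_biUnion_le
  obtain ⟨T, hTAB, hT⟩ := exists_subset_card_eq (hA B hB)
  exact mem_biUnion.2 ⟨T, mem_powersetCard.2 ⟨hTAB.trans inter_subset_left, hT⟩,
    mem_filter.2 ⟨hB, hTAB.trans inter_subset_right⟩⟩

theorem exists_mem_inter_notMem_of_not_subset {B : Finset α} (hTW : ¬T ⊆ W)
    (h : #T ≤ #(B ∩ W)) : ∃ x ∈ B ∩ W, x ∉ T := by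
  by_contra! hBWT
  have hT : T ∩ W ⊂ T := ⟨inter_subset_left, fun hT => hTW fun x hx => (mem_inter.1 (hT hx)).2⟩
  have : #(B ∩ W) < #T :=
    (card_le_card fun x hx => mem_inter.2 ⟨hBWT x hx, (mem_inter.1 hx).2⟩).trans_lt
      (card_lt_card hT)
  omega

theorem card_filter_superset_le_of_not_subset (hF : F ⊆ U.powersetCard k)
    (hint : ∀ B ∈ F, t ≤ #(B ∩ W)) (hWF : W ∈ F) (hTW : ¬T ⊆ W) (hTU : T ⊆ U) (hT : #T = t) :
    #{B ∈ F | T ⊆ B} ≤ k * (#U - (t + 1)).choose (k - (t + 1)) := by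
  obtain ⟨hWU, hWk⟩ := mem_powersetCard.1 (hF hWF)
  have hcover : {B ∈ F | T ⊆ B} ⊆ (W \ T).biUnion fun x => {B ∈ F | insert x T ⊆ B} := by
    intro B hB
    obtain ⟨hBF, hTB⟩ := mem_filter.1 hB
    obtain ⟨x, hxBW, hxT⟩ :=
      exists_mem_inter_notMem_of_not_subset hTW (hT ▸ hint B hBF)
    exact mem_biUnion.2 ⟨x, mem_sdiff.2 ⟨(mem_inter.1 hxBW).2, hxT⟩,
      mem_filter.2 ⟨hBF, insert_subset (mem_inter.1 hxBW).1 hTB⟩⟩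
  calc #{B ∈ F | T ⊆ B}
      ≤ ∑ x ∈ W \ T, #{B ∈ F | insert x T ⊆ B} := (card_le_card hcover).trans card_biUnion_le
    _ ≤ ∑ _x ∈ W \ T, (#U - (t + 1)).choose (k - (t + 1)) := by
        refine sum_le_sum fun x hx => ?_
        obtain ⟨hxW, hxT⟩ := mem_sdiff.1 hx
        have hxTU : insert x T ⊆ U := insert_subset (hWU hxW) hTU
        simpa [card_insert_of_notMem hxT, hT] using card_filter_superset_le hF hxTU
    _ ≤ k * (#U - (t + 1)).choose (k - (t + 1)) := by
        rw [sum_const, smul_eq_mul, ← hWk]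
        exact Nat.mul_le_mul_right _ (card_le_card sdiff_subset)

theorem card_le_of_forall_exists_not_subset (hF : F ⊆ U.powersetCard k)
    (hint : ∀ A ∈ F, ∀ B ∈ F, t ≤ #(A ∩ B)) (hA : A ∈ F)
    (hW : ∀ T ⊆ A, #T = t → ∃ W ∈ F, ¬T ⊆ W) :
    #F ≤ k.choose t * k * (#U - (t + 1)).choose (k - (t + 1)) := by
  obtain ⟨hAU, hAk⟩ := mem_powersetCard.1 (hF hA)
  calc #F ≤ ∑ T ∈ A.powersetCard t, #{B ∈ F | T ⊆ B} :=
        card_le_sum_card_filter_superset (hint A hA)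
    _ ≤ ∑ _T ∈ A.powersetCard t, k * (#U - (t + 1)).choose (k - (t + 1)) := by
        refine sum_le_sum fun T hT => ?_
        obtain ⟨hTA, hTt⟩ := mem_powersetCard.1 hT
        obtain ⟨W, hWF, hTW⟩ := hW T hTA hTt
        exact card_filter_superset_le_of_not_subset hF (fun B hB => hint B hB W hWF) hWF hTW
          (hTA.trans hAU) hTt
    _ = k.choose t * k * (#U - (t + 1)).choose (k - (t + 1)) := by
        rw [sum_const, card_powersetCard, hAk, smul_eq_mul, mul_assoc]

end Finset

theorem ekr_t_intersecting_large_n_general (k t : ℕ) (htk : t ≤ k) :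
    ∃ N : ℕ, ∀ n : ℕ, N < n →
      ∀ F : Finset (Finset ℕ),
        (∀ A ∈ F, A ⊆ Finset.Icc 1 n) →
        (∀ A ∈ F, A.card = k) →
        (∀ A ∈ F, ∀ B ∈ F, t ≤ (A ∩ B).card) →
        F.card ≤ (n - t).choose (k - t) := by
  refine ⟨t + k.choose t * k * k, fun n hn F hsub hcard hint => ?_⟩
  have hF : F ⊆ (Icc 1 n).powersetCard k :=
    fun A hA => mem_powersetCard.2 ⟨hsub A hA, hcard A hA⟩
  have hU : #(Icc 1 n) = n := by simp
  rcases htk.eq_or_lt with rfl | htk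
  · simpa using card_le_one_of_le_card_inter hcard hint
  rcases F.eq_empty_or_nonempty with rfl | ⟨A, hA⟩
  · simp
  by_cases hcommon : ∃ T ⊆ A, #T = t ∧ ∀ B ∈ F, T ⊆ B
  · obtain ⟨T, hTA, hT, hTF⟩ := hcommon
    rw [← filter_true_of_mem hTF, ← hU, ← hT]
    exact card_filter_superset_le hF (hTA.trans (hsub A hA))
  push Not at hcommon
  calc #F ≤ k.choose t * k * (n - (t + 1)).choose (k - (t + 1)) :=
        hU ▸ card_le_of_forall_exists_not_subset hF hint hA hcommon
    _ ≤ (n - (t + 1) + 1).choose (k - (t + 1) + 1) := by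
        refine Nat.mul_choose_le_choose_succ_succ ?_
        have : k.choose t * k * (k - t) ≤ k.choose t * k * k := Nat.mul_le_mul_left _ (by omega)
        rw [show k - (t + 1) + 1 = k - t by omega]
        omega
    _ = (n - t).choose (k - t) := by congr 1 <;> omega

/-- **Erdős–Ko–Rado, t-intersecting, large n.** For all `1 ≤ t ≤ k`
there is a threshold `N` such that for every `n > N`, every `t`-intersecting family
of `k`-element subsets of `[n]` satisfies `|F| ≤ C(n-t, k-t)`. -/
theorem ekr_t_intersecting_large_n (k t : ℕ) (ht : 1 ≤ t) (htk : t ≤ k) :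
    ∃ N : ℕ, ∀ n : ℕ, N < n →
      ∀ F : Finset (Finset ℕ),
        (∀ A ∈ F, A ⊆ Finset.Icc 1 n) →
        (∀ A ∈ F, A.card = k) →
        (∀ A ∈ F, ∀ B ∈ F, t ≤ (A ∩ B).card) →
        F.card ≤ (n - t).choose (k - t) :=
  ekr_t_intersecting_large_n_general k t htk
end

section
/- Let t ≥ 1 and suppose n + t is even with (n+t)/2 - 1 ≥ 0. Let F be the family of all subsets of [n] of size at least (n+t)/2 - 1. Then F is union-t-intersecting and |F| = Σ_{i=(n+t)/2 - 1}^{n} C(n, i). -/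
/-!
Two distinct sets of size at least `m - 1` have a union of size at least `m`. So with
`n + t = 2m`, both unions `F₁ ∪ F₂` and `G₁ ∪ G₂` have at least `m` elements of `[n]`, and by
inclusion–exclusion they share at least `2m - n = t` of them.
-/

open Finset

variable {α : Type*}

def UnionIntersecting [DecidableEq α] (t : ℕ) (𝓕 : Finset (Finset α)) : Prop :=
  ∀ F₁ ∈ 𝓕, ∀ F₂ ∈ 𝓕, ∀ G₁ ∈ 𝓕, ∀ G₂ ∈ 𝓕, F₁ ≠ F₂ → G₁ ≠ G₂ → t ≤ #((F₁ ∪ F₂) ∩ (G₁ ∪ G₂))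

namespace Finset

theorem succ_le_card_union_of_ne [DecidableEq α] {A B : Finset α} {k : ℕ} (hAB : A ≠ B)
    (hA : k ≤ #A) (hB : k ≤ #B) : k + 1 ≤ #(A ∪ B) := by
  by_contra! h
  have hAU : A = A ∪ B := eq_of_subset_of_card_le subset_union_left (by omega)
  have hBU : B = A ∪ B := eq_of_subset_of_card_le subset_union_right (by omega)
  exact hAB (hAU.trans hBU.symm)

theorem card_add_card_le_card_add_card_inter [DecidableEq α] {s U V : Finset α} (hU : U ⊆ s)
    (hV : V ⊆ s) :
    #U + #V ≤ #s + #(U ∩ V) := by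
  rw [← card_union_add_card_inter]
  exact Nat.add_le_add_right (card_le_card (union_subset hU hV)) _

theorem card_filter_powerset_le_card (s : Finset α) (k : ℕ) :
    #{A ∈ s.powerset | k ≤ #A} = ∑ i ∈ Icc k #s, (#s).choose i := by
  have hmaps : Set.MapsTo card (SetLike.coe {A ∈ s.powerset | k ≤ #A}) (Icc k #s) := by
    intro A hA
    obtain ⟨hAs, hkA⟩ := mem_filter.1 (mem_coe.1 hA)
    exact mem_Icc.2 ⟨hkA, card_le_card (mem_powerset.1 hAs)⟩
  rw [card_eq_sum_card_fiberwise hmaps]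
  refine sum_congr rfl fun i hi => ?_
  have hfiber : {A ∈ {A ∈ s.powerset | k ≤ #A} | #A = i} = powersetCard i s := by
    rw [powersetCard_eq_filter, filter_filter]
    exact filter_congr fun A _ => ⟨And.right, fun h => ⟨h ▸ (mem_Icc.1 hi).1, h⟩⟩
  rw [hfiber, card_powersetCard]

end Finset

theorem unionIntersecting_filter_powerset [DecidableEq α] {s : Finset α} {t m : ℕ}
    (hm : #s + t = 2 * m) :
    UnionIntersecting t {A ∈ s.powerset | m - 1 ≤ #A} := by
  intro F₁ hF₁ F₂ hF₂ G₁ hG₁ G₂ hG₂ hF hG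
  simp only [mem_filter, mem_powerset] at hF₁ hF₂ hG₁ hG₂
  have hFU := succ_le_card_union_of_ne hF hF₁.2 hF₂.2
  have hGU := succ_le_card_union_of_ne hG hG₁.2 hG₂.2
  have hinter := card_add_card_le_card_add_card_inter
    (union_subset hF₁.1 hF₂.1) (union_subset hG₁.1 hG₂.1)
  omega

theorem union_t_intersecting_construction_even_general (n t : ℕ)
    (heven : Even (n + t)) (F : Finset (Finset ℕ))
    (hF : F = (Finset.Icc 1 n).powerset.filter
      (fun A => (n + t) / 2 - 1 ≤ A.card)) :
    (∀ F₁ ∈ F, ∀ F₂ ∈ F, ∀ G₁ ∈ F, ∀ G₂ ∈ F, F₁ ≠ F₂ → G₁ ≠ G₂ →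
      t ≤ ((F₁ ∪ F₂) ∩ (G₁ ∪ G₂)).card) ∧
    F.card = ∑ i ∈ Finset.Icc ((n + t) / 2 - 1) n, n.choose i := by
  obtain ⟨m, hm⟩ := heven
  have hcard : #(Icc 1 n) = n := Nat.card_Icc 1 n
  have hhalf : (n + t) / 2 = m := by omega
  subst hF
  rw [hhalf]
  refine ⟨unionIntersecting_filter_powerset (by omega), ?_⟩
  simpa only [hcard] using card_filter_powerset_le_card (Icc 1 n) (m - 1)

/-- Let `t ≥ 1` and suppose `n + t` is even (so `(n+t)/2 - 1 ≥ 0`).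
Let `F` be the family of all subsets of `[n]` of size at least `(n+t)/2 - 1`.
Then `F` is union-`t`-intersecting and `|F| = Σ_{i=(n+t)/2-1}^{n} C(n,i)`. -/
theorem union_t_intersecting_construction_even (n t : ℕ) (ht : 1 ≤ t)
    (heven : Even (n + t)) (F : Finset (Finset ℕ))
    (hF : F = (Finset.Icc 1 n).powerset.filter
      (fun A => (n + t) / 2 - 1 ≤ A.card)) :
    (∀ F₁ ∈ F, ∀ F₂ ∈ F, ∀ G₁ ∈ F, ∀ G₂ ∈ F, F₁ ≠ F₂ → G₁ ≠ G₂ →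
      t ≤ ((F₁ ∪ F₂) ∩ (G₁ ∪ G₂)).card) ∧
    F.card = ∑ i ∈ Finset.Icc ((n + t) / 2 - 1) n, n.choose i :=
  union_t_intersecting_construction_even_general n t heven F hF
end
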